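/- Suppose liminf_{t→∞} ∫_{τ(t)}^{t} p(s) ds = q > 0, the equation e^{q λ} = λ has a real root with smallest root λ*, and there exists a non-decreasing continuous function σ : [t_0,∞) → ℝ with τ(t) ≤ σ(t) ≤ t for all t ≥ t_0, such that limsup_{ε→0+} ( limsup_{t→∞} ∫_{σ(t)}^{t} p(s) · exp( ∫_{τ(s)}^{σ(t)} (λ* − ε) p(ξ) dξ ) ds ) > 1. Then every solution of the equation x'(t) + p(t) x(τ(t)) = 0 is oscillatory. -/

import Mathlib

open Real Filter MeasureTheory


noncomputable def iterSeq (c : ℝ) : ℕ → ℝ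
  | 0 => 1
  | n + 1 => Real.exp (c * iterSeq c n)

lemma iterSeq_one_le {c : ℝ} (hc : 0 ≤ c) : ∀ n, 1 ≤ iterSeq c n := by
  intro n
  induction n with
  | zero => simp [iterSeq]
  | succ n ih =>
    simpa [iterSeq] using Real.one_le_exp (mul_nonneg hc (by linarith))

lemma iterSeq_mono_n {c : ℝ} (hc : 0 ≤ c) : Monotone (iterSeq c) := by
  apply monotone_nat_of_le_succ
  intro n
  induction n with
  | zero =>
    show (1:ℝ) ≤ Real.exp (c * 1)
    exact Real.one_le_exp (by linarith)
  | succ n ih =>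
    simp only [iterSeq]
    exact Real.exp_le_exp.2 (mul_le_mul_of_nonneg_left ih hc)

lemma iterSeq_mono_c {c₁ c₂ : ℝ} (h1 : 0 ≤ c₁) (h : c₁ ≤ c₂) :
    ∀ n, iterSeq c₁ n ≤ iterSeq c₂ n := by
  intro n
  induction n with
  | zero => simp [iterSeq]
  | succ n ih =>
    simp only [iterSeq]
    apply Real.exp_le_exp.2
    calc c₁ * iterSeq c₁ n ≤ c₂ * iterSeq c₁ n :=
          mul_le_mul_of_nonneg_right h (by linarith [iterSeq_one_le h1 n])
      _ ≤ c₂ * iterSeq c₂ n := mul_le_mul_of_nonneg_left ih (by linarith)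

lemma iterSeq_le_lamStar {q c lamStar : ℝ} (hc : 0 < c) (hcq : c ≤ q)
    (hroot : Real.exp (q * lamStar) = lamStar) :
    ∀ n, iterSeq c n ≤ lamStar := by
  have hpos : 0 < lamStar := hroot ▸ Real.exp_pos _
  have hq : 0 < q := lt_of_lt_of_le hc hcq
  have h1 : 1 ≤ lamStar := by
    have := Real.one_le_exp (le_of_lt (mul_pos hq hpos))
    linarith [hroot ▸ this]
  intro n
  induction n with
  | zero => simpa [iterSeq]
  | succ n ih =>
    simp only [iterSeq]
    rw [← hroot]
    apply Real.exp_le_exp.2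
    have h0 : (0:ℝ) ≤ iterSeq c n := by linarith [iterSeq_one_le hc.le n]
    calc c * iterSeq c n ≤ q * iterSeq c n := mul_le_mul_of_nonneg_right hcq h0
      _ ≤ q * lamStar := mul_le_mul_of_nonneg_left ih hq.le

/-- Key analytic fact : iterates with rates approaching `q` approach `lamStar`. -/
lemma exists_iter_close (q lamStar : ℝ) (hq : 0 < q)
    (hroot : Real.exp (q * lamStar) = lamStar)
    (hsmall : ∀ l, Real.exp (q * l) = l → lamStar ≤ l)
    (ε : ℝ) (hε : 0 < ε) :
    ∃ q', 0 < q' ∧ q' < q ∧ ∃ n, lamStar - ε < iterSeq q' n := by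
  by_contra hcon
  push_neg at hcon
  -- whole family bounded by lamStar - ε
  set qn : ℕ → ℝ := fun n => q - q / (n + 2) with hqn
  have hqn_pos : ∀ n, 0 < qn n := by
    intro n
    have h2 : (0:ℝ) < (n:ℝ) + 2 := by positivity
    have : q / ((n:ℝ) + 2) < q := by
      rw [div_lt_iff₀ h2]
      nlinarith
    simpa [hqn] using by linarith
  have hqn_lt : ∀ n, qn n < q := by
    intro n
    have h2 : (0:ℝ) < (n:ℝ) + 2 := by positivity
    have : 0 < q / ((n:ℝ) + 2) := by positivity
    simp only [hqn]; linarith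
  have hqn_mono : Monotone qn := by
    intro a b hab
    simp only [hqn]
    have h2 : (0:ℝ) < (a:ℝ) + 2 := by positivity
    have hle : ((a:ℝ) + 2) ≤ ((b:ℝ) + 2) := by
      have : ((a:ℝ)) ≤ (b:ℝ) := Nat.cast_le.2 hab
      linarith
    have := div_le_div_of_nonneg_left hq.le h2 hle
    linarith
  have hqn_tendsto : Filter.Tendsto qn atTop (nhds q) := by
    have : Filter.Tendsto (fun n : ℕ => q / ((n:ℝ) + 2)) atTop (nhds 0) := by
      apply Filter.Tendsto.div_atTop tendsto_const_nhds
      exact Filter.tendsto_atTop_add_const_right _ _ tendsto_natCast_atTop_atTop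
    have h2 : Filter.Tendsto (fun n : ℕ => q - q / ((n:ℝ) + 2)) atTop (nhds (q - 0)) :=
      Filter.Tendsto.sub tendsto_const_nhds this
    simpa [hqn] using h2
  -- diagonal sequence
  set D : ℕ → ℝ := fun n => iterSeq (qn n) n with hD
  have hD_mono : Monotone D := by
    apply monotone_nat_of_le_succ
    intro n
    calc D n ≤ iterSeq (qn n) (n+1) := iterSeq_mono_n (hqn_pos n).le (Nat.le_succ n)
      _ ≤ iterSeq (qn (n+1)) (n+1) := iterSeq_mono_c (hqn_pos n).le (hqn_mono (Nat.le_succ n)) _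
  have hD_ub : ∀ n, D n ≤ lamStar - ε := fun n => hcon (qn n) (hqn_pos n) (hqn_lt n) n
  have hD_lb : ∀ n, 1 ≤ D n := fun n => iterSeq_one_le (hqn_pos n).le n
  have hbdd : BddAbove (Set.range D) := ⟨lamStar - ε, by rintro _ ⟨n, rfl⟩; exact hD_ub n⟩
  set S := ⨆ n, D n with hS
  have hDS : Filter.Tendsto D atTop (nhds S) := tendsto_atTop_ciSup hD_mono hbdd
  -- squeeze for exp(qn n * D n)
  have hmid : ∀ n, D n ≤ Real.exp (qn n * D n) ∧ Real.exp (qn n * D n) ≤ D (n+1) := by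
    intro n
    constructor
    · have : Real.exp (qn n * D n) = iterSeq (qn n) (n+1) := rfl
      rw [this]
      exact iterSeq_mono_n (hqn_pos n).le (Nat.le_succ n)
    · have : Real.exp (qn n * D n) = iterSeq (qn n) (n+1) := rfl
      rw [this]
      exact iterSeq_mono_c (hqn_pos n).le (hqn_mono (Nat.le_succ n)) _
  have hsq : Filter.Tendsto (fun n => Real.exp (qn n * D n)) atTop (nhds S) := by
    apply tendsto_of_tendsto_of_tendsto_of_le_of_le hDS (hDS.comp (Filter.tendsto_add_atTop_nat 1))
      (fun n => (hmid n).1) (fun n => (hmid n).2)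
  have hsq2 : Filter.Tendsto (fun n => Real.exp (qn n * D n)) atTop (nhds (Real.exp (q * S))) :=
    (Real.continuous_exp.tendsto _).comp ((hqn_tendsto.mul hDS))
  have hfix : Real.exp (q * S) = S := tendsto_nhds_unique hsq2 hsq
  have hSle : S ≤ lamStar - ε := ciSup_le hD_ub
  linarith [hsmall S hfix]


section Aux

lemma limsup_le_one_of_eventually {f : Filter ℝ} {u : ℝ → ℝ}
    (h : ∀ᶠ x in f, u x ≤ 1) : Filter.limsup u f ≤ 1 := by
  rw [Filter.limsup_eq]
  by_cases hb : BddBelow {a | ∀ᶠ x in f, u x ≤ a}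
  · exact csInf_le hb h
  · rw [Real.sInf_of_not_bddBelow hb]; norm_num

lemma evt_of_liminf {f : ℝ → ℝ} {q q' : ℝ} (h : Filter.liminf f atTop = q)
    (h1 : q' < q) (hq : 0 < q) : ∀ᶠ t in atTop, q' ≤ f t := by
  rw [Filter.liminf_eq] at h
  have hne : {a | ∀ᶠ n in atTop, a ≤ f n}.Nonempty := by
    by_contra hc
    rw [Set.not_nonempty_iff_eq_empty] at hc
    rw [hc, Real.sSup_empty] at h
    linarith
  obtain ⟨a, ha, haq⟩ := exists_lt_of_lt_csSup hne (h ▸ h1)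
  exact ha.mono fun t ht => le_trans haq.le ht

end Aux

/-- The main auxiliary lemma: a positive solution leads to a contradiction. -/
lemma main_aux
    (t0 : ℝ) (p τ : ℝ → ℝ)
    (hp_cont : ContinuousOn p (Set.Ici t0))
    (hp_nonneg : ∀ t, t0 ≤ t → 0 ≤ p t)
    (hτ_cont : ContinuousOn τ (Set.Ici t0))
    (hτ_le : ∀ t, t0 ≤ t → τ t ≤ t)
    (hτ_tendsto : Filter.Tendsto τ atTop atTop)
    (q : ℝ) (hq_pos : 0 < q)
    (hq : Filter.liminf (fun t : ℝ => ∫ s in τ t..t, p s) atTop = q)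
    (lamStar : ℝ)
    (hroot : Real.exp (q * lamStar) = lamStar)
    (hsmallest : ∀ lam, Real.exp (q * lam) = lam → lamStar ≤ lam)
    (σ : ℝ → ℝ)
    (hσ_mono : MonotoneOn σ (Set.Ici t0))
    (hσ_ge : ∀ t, t0 ≤ t → τ t ≤ σ t)
    (hσ_le : ∀ t, t0 ≤ t → σ t ≤ t)
    (hlimsup :
      Filter.limsup (fun ε : ℝ =>
        Filter.limsup (fun t : ℝ =>
          ∫ s in σ t..t, p s *
            Real.exp (∫ ξ in τ s..σ t, (lamStar - ε) * p ξ)) atTop)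
        (nhdsWithin 0 (Set.Ioi 0)) > 1)
    (y : ℝ → ℝ) (hy_cont : Continuous y)
    (B : ℝ) (hB : t0 ≤ B)
    (hy_pos : ∀ t, B ≤ t → 0 < y t)
    (hy_sol : ∀ t, B ≤ t → HasDerivAt y (-(p t * y (τ t))) t) : False := by
  have hlam_pos : 0 < lamStar := hroot ▸ Real.exp_pos _
  -- globally continuous extension of p
  set pt : ℝ → ℝ := fun t => p (max t0 t) with hpt_def
  have hpt_cont : Continuous pt :=
    hp_cont.comp_continuous (continuous_const.max continuous_id) (fun x => Set.mem_Ici.2 (le_max_left _ _))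
  have hpt_nonneg : ∀ t, 0 ≤ pt t := fun t => hp_nonneg _ (le_max_left _ _)
  have hpt_eq : ∀ t, t0 ≤ t → pt t = p t := fun t ht => by
    simp only [hpt_def, max_eq_right ht]
  -- primitive
  set Φ : ℝ → ℝ := fun u => ∫ s in t0..u, pt s with hΦ_def
  have hΦ_deriv : ∀ u, HasDerivAt Φ (pt u) u := fun u =>
    intervalIntegral.integral_hasDerivAt_right (hpt_cont.intervalIntegrable _ _)
      (hpt_cont.stronglyMeasurableAtFilter _ _) hpt_cont.continuousAt
  have hΦ_cont : Continuous Φ :=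
    continuous_iff_continuousAt.2 fun u => (hΦ_deriv u).continuousAt
  have hΦ_sub : ∀ a b : ℝ, (∫ s in a..b, pt s) = Φ b - Φ a := by
    intro a b
    rw [eq_comm]
    exact intervalIntegral.integral_interval_sub_left
      (hpt_cont.intervalIntegrable _ _) (hpt_cont.intervalIntegrable _ _)
  -- threshold beyond which τ lands past B
  obtain ⟨T2', hT2'⟩ := Filter.eventually_atTop.1 (hτ_tendsto.eventually_ge_atTop B)
  set T2 : ℝ := max T2' B with hT2_def
  have hT2B : B ≤ T2 := le_max_right _ _
  have hτT2 : ∀ t, T2 ≤ t → B ≤ τ t := fun t ht => hT2' t (le_trans (le_max_left _ _) ht)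
  -- y is antitone past T2
  have hy_anti : AntitoneOn y (Set.Ici T2) := by
    apply antitoneOn_of_deriv_nonpos (convex_Ici _) hy_cont.continuousOn
    · intro u hu
      rw [interior_Ici] at hu
      exact ((hy_sol u (le_trans hT2B hu.le)).differentiableAt).differentiableWithinAt
    · intro u hu
      rw [interior_Ici] at hu
      rw [(hy_sol u (le_trans hT2B hu.le)).deriv]
      have h1 : 0 ≤ p u := hp_nonneg u (le_trans (le_trans hB hT2B) hu.le)
      have h2 : 0 < y (τ u) := hy_pos _ (hτT2 u hu.le)
      nlinarith
  -- Grönwall-type estimate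
  have hgron : ∀ c : ℝ, 0 ≤ c → ∀ a b : ℝ, B ≤ a → a ≤ b →
      (∀ u, a ≤ u → u ≤ b → c * y u ≤ y (τ u)) →
      y b * Real.exp (c * (Φ b - Φ a)) ≤ y a := by
    intro c hc a b hBa hab hcy
    set F : ℝ → ℝ := fun u => Real.log (y u) + c * Φ u with hF_def
    have hposIcc : ∀ u ∈ Set.Icc a b, 0 < y u := fun u hu => hy_pos u (le_trans hBa hu.1)
    have hF_hasDeriv : ∀ u ∈ Set.Ioo a b,
        HasDerivAt F (-(p u * y (τ u)) / y u + c * pt u) u := by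
      intro u hu
      have h1 : HasDerivAt y (-(p u * y (τ u))) u := hy_sol u (le_trans hBa hu.1.le)
      exact (h1.log (hy_pos u (le_trans hBa hu.1.le)).ne').add ((hΦ_deriv u).const_mul c)
    have hF_anti : AntitoneOn F (Set.Icc a b) := by
      apply antitoneOn_of_deriv_nonpos (convex_Icc _ _)
      · exact (hy_cont.continuousOn.log fun u hu => (hposIcc u hu).ne').add
          ((continuous_const.mul hΦ_cont).continuousOn)
      · intro u hu
        rw [interior_Icc] at hu
        exact (hF_hasDeriv u hu).differentiableAt.differentiableWithinAt
      · intro u hu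
        rw [interior_Icc] at hu
        rw [(hF_hasDeriv u hu).deriv]
        have hyu : 0 < y u := hy_pos u (le_trans hBa hu.1.le)
        have hpu : 0 ≤ p u := hp_nonneg u (le_trans (le_trans hB hBa) hu.1.le)
        have hptu : pt u = p u := hpt_eq u (le_trans (le_trans hB hBa) hu.1.le)
        have hkey : c * y u ≤ y (τ u) := hcy u hu.1.le hu.2.le
        rw [hptu]
        have h2 : -(p u * y (τ u)) / y u ≤ -(c * p u) := by
          rw [div_le_iff₀ hyu]
          nlinarith
        linarith
    have hFba := hF_anti (Set.left_mem_Icc.2 hab) (Set.right_mem_Icc.2 hab) hab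
    have hya : 0 < y a := hy_pos a hBa
    have hyb : 0 < y b := hy_pos b (le_trans hBa hab)
    have : y b * Real.exp (c * (Φ b - Φ a)) = Real.exp (F b - c * Φ a) := by
      rw [show F b - c * Φ a = Real.log (y b) + c * (Φ b - Φ a) by simp only [hF_def]; ring,
        Real.exp_add, Real.exp_log hyb]
    rw [this]
    calc Real.exp (F b - c * Φ a) ≤ Real.exp (F a - c * Φ a) := by
          apply Real.exp_le_exp.2; linarith
      _ = y a := by
          rw [show F a - c * Φ a = Real.log (y a) by simp only [hF_def]; ring, Real.exp_log hya]
  -- eventual integral lower bound for q' < q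
  have hEVT : ∀ q' : ℝ, q' < q → ∀ᶠ t in atTop, q' ≤ Φ t - Φ (τ t) := by
    intro q' hq'
    have h1 := evt_of_liminf hq hq' hq_pos
    have h2 : ∀ᶠ t in atTop, t0 ≤ τ t := hτ_tendsto.eventually_ge_atTop t0
    filter_upwards [h1, h2, eventually_ge_atTop t0] with t ht1 ht2 ht3
    have heq : (∫ s in τ t..t, p s) = Φ t - Φ (τ t) := by
      rw [← hΦ_sub]
      apply intervalIntegral.integral_congr
      intro s hs
      rw [Set.uIcc_of_le (hτ_le t ht3)] at hs
      exact (hpt_eq s (le_trans ht2 hs.1)).symm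
    exact heq ▸ ht1
  -- ratio lower bound  (lamStar - ε) eventually
  have hPfin : ∀ ε : ℝ, 0 < ε → ∀ᶠ t in atTop, (lamStar - ε) * y t ≤ y (τ t) := by
    intro ε hε
    obtain ⟨q', hq'0, hq'q, n, hn⟩ := exists_iter_close q lamStar hq_pos hroot hsmallest ε hε
    have hP : ∀ m : ℕ, ∀ᶠ t in atTop, (iterSeq q' m) * y t ≤ y (τ t) := by
      intro m
      induction m with
      | zero =>
        filter_upwards [hτ_tendsto.eventually_ge_atTop T2, eventually_ge_atTop (max T2 t0)]
          with t h1 h2'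
        have htT2 : T2 ≤ t := le_trans (le_max_left _ _) h2'
        show (1:ℝ) * y t ≤ y (τ t)
        rw [one_mul]
        exact hy_anti (Set.mem_Ici.2 h1) (Set.mem_Ici.2 htT2)
          (hτ_le t (le_trans (le_max_right _ _) h2'))
      | succ m ih =>
        obtain ⟨Tc, hTc⟩ := Filter.eventually_atTop.1 ih
        have hc0 : (0:ℝ) ≤ iterSeq q' m := le_trans zero_le_one (iterSeq_one_le hq'0.le m)
        filter_upwards [hτ_tendsto.eventually_ge_atTop (max Tc B), hEVT q' hq'q,
          eventually_ge_atTop (max B t0)] with t h1 h2 h3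
        have hτB : B ≤ τ t := le_trans (le_max_right _ _) h1
        have hτt : τ t ≤ t := hτ_le t (le_trans (le_max_right _ _) h3)
        have hg := hgron (iterSeq q' m) hc0 (τ t) t hτB hτt
          (fun u hu1 hu2 => hTc u (le_trans (le_trans (le_max_left _ _) h1) hu1))
        show Real.exp (q' * iterSeq q' m) * y t ≤ y (τ t)
        have hyt : 0 < y t := hy_pos t (le_trans (le_max_left _ _) h3)
        calc Real.exp (q' * iterSeq q' m) * y t
            = y t * Real.exp (iterSeq q' m * q') := by rw [mul_comm q' _]; ring
          _ ≤ y t * Real.exp (iterSeq q' m * (Φ t - Φ (τ t))) := by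
              apply mul_le_mul_of_nonneg_left _ hyt.le
              exact Real.exp_le_exp.2 (mul_le_mul_of_nonneg_left h2 hc0)
          _ ≤ y (τ t) := hg
    filter_upwards [hP n, eventually_ge_atTop B] with t h1 h2
    have hyt : (0:ℝ) ≤ y t := (hy_pos t h2).le
    nlinarith
  -- outer limsup is at most 1 : contradiction
  have hG : ∀ᶠ ε in nhdsWithin (0:ℝ) (Set.Ioi 0),
      Filter.limsup (fun t : ℝ => ∫ s in σ t..t, p s *
        Real.exp (∫ ξ in τ s..σ t, (lamStar - ε) * p ξ)) atTop ≤ 1 := by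
    filter_upwards [Ioo_mem_nhdsGT_of_mem (Set.mem_Ico.2 ⟨le_refl (0:ℝ), hlam_pos⟩)]
      with ε hε
    set c := lamStar - ε with hc_def
    have hc0 : 0 < c := by simp only [hc_def]; linarith [hε.2]
    apply limsup_le_one_of_eventually
    obtain ⟨Tc, hTc⟩ := Filter.eventually_atTop.1 (hPfin ε hε.1)
    set M := max Tc B with hM_def
    have hMB : B ≤ M := le_max_right _ _
    obtain ⟨R1', hR1'⟩ := Filter.eventually_atTop.1 (hτ_tendsto.eventually_ge_atTop M)
    set R1 := max R1' M with hR1_def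
    have hR1M : M ≤ R1 := le_max_right _ _
    have hτR1 : ∀ u, R1 ≤ u → M ≤ τ u := fun u hu => hR1' u (le_trans (le_max_left _ _) hu)
    obtain ⟨R2, hR2⟩ := Filter.eventually_atTop.1 (hτ_tendsto.eventually_ge_atTop R1)
    filter_upwards [eventually_ge_atTop (max R2 B)] with t ht
    have htB : B ≤ t := le_trans (le_max_right _ _) ht
    have ht0 : t0 ≤ t := le_trans hB htB
    have hτtR1 : R1 ≤ τ t := hR2 t (le_trans (le_max_left _ _) ht)
    set a := σ t with ha_def
    have haR1 : R1 ≤ a := le_trans hτtR1 (hσ_ge t ht0)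
    have haB : B ≤ a := le_trans hMB (le_trans hR1M haR1)
    have hat : a ≤ t := hσ_le t ht0
    have ha0 : t0 ≤ a := le_trans hB haB
    have hτsM : ∀ s, a ≤ s → M ≤ τ s := fun s hs => hτR1 s (le_trans haR1 hs)
    have hτsa : ∀ s, a ≤ s → s ≤ t → τ s ≤ a := fun s hs1 hs2 =>
      le_trans (hσ_ge s (le_trans ha0 hs1))
        (hσ_mono (Set.mem_Ici.2 (le_trans ha0 hs1)) (Set.mem_Ici.2 ht0) hs2)
    have hkey : ∀ s, a ≤ s → s ≤ t → y a * Real.exp (c * (Φ a - Φ (τ s))) ≤ y (τ s) := by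
      intro s hs1 hs2
      apply hgron c hc0.le (τ s) a (le_trans hMB (hτsM s hs1)) (hτsa s hs1 hs2)
      intro u hu1 hu2
      exact hTc u (le_trans (le_max_left Tc B) (le_trans (hτsM s hs1) hu1))
    have hsub : Set.uIcc a t ⊆ Set.Ici t0 := by
      rw [Set.uIcc_of_le hat]; intro s hs; exact le_trans ha0 hs.1
    have hcont_yτ : ContinuousOn (fun s => y (τ s)) (Set.uIcc a t) :=
      hy_cont.comp_continuousOn (hτ_cont.mono hsub)
    have hint2 : IntervalIntegrable (fun s => p s * y (τ s)) volume a t :=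
      ((hp_cont.mono hsub).mul hcont_yτ).intervalIntegrable
    have hFTC : (∫ s in a..t, -(p s * y (τ s))) = y t - y a := by
      apply intervalIntegral.integral_eq_sub_of_hasDerivAt
      · intro s hs
        rw [Set.uIcc_of_le hat] at hs
        exact hy_sol s (le_trans haB hs.1)
      · exact hint2.neg
    have hFTC2 : (∫ s in a..t, p s * y (τ s)) = y a - y t := by
      have h2 := intervalIntegral.integral_neg
        (f := fun s => p s * y (τ s)) (a := a) (b := t) (μ := volume)
      rw [h2] at hFTC
      linarith
    set g : ℝ → ℝ := fun s => p s * (y a * Real.exp (c * (Φ a - Φ (τ s)))) with hg_def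
    have hg_cont : ContinuousOn g (Set.uIcc a t) := by
      apply (hp_cont.mono hsub).mul
      apply continuousOn_const.mul
      exact Real.continuous_exp.comp_continuousOn
        (continuousOn_const.mul
          (continuousOn_const.sub (hΦ_cont.comp_continuousOn (hτ_cont.mono hsub))))
    have hmono : (∫ s in a..t, g s) ≤ y a - y t := by
      rw [← hFTC2]
      apply intervalIntegral.integral_mono_on hat hg_cont.intervalIntegrable hint2
      intro s hs
      exact mul_le_mul_of_nonneg_left (hkey s hs.1 hs.2) (hp_nonneg s (le_trans ha0 hs.1))
    have hres : (∫ s in a..t, p s * Real.exp (c * (Φ a - Φ (τ s)))) ≤ 1 := by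
      have hya : 0 < y a := hy_pos a haB
      have hyt : 0 < y t := hy_pos t htB
      have h1 : (∫ s in a..t, g s)
          = y a * ∫ s in a..t, p s * Real.exp (c * (Φ a - Φ (τ s))) := by
        rw [← intervalIntegral.integral_const_mul]
        apply intervalIntegral.integral_congr
        intro s hs
        simp only [hg_def]
        ring
      rw [h1] at hmono
      nlinarith
    have hid : (∫ s in σ t..t, p s * Real.exp (∫ ξ in τ s..σ t, (lamStar - ε) * p ξ))
        = ∫ s in a..t, p s * Real.exp (c * (Φ a - Φ (τ s))) := by
      apply intervalIntegral.integral_congr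
      intro s hs
      rw [Set.uIcc_of_le hat] at hs
      have hτs0 : t0 ≤ τ s := le_trans (le_trans hB hMB) (hτsM s hs.1)
      have e1 : (∫ ξ in τ s..σ t, (lamStar - ε) * p ξ) = ∫ ξ in τ s..a, c * pt ξ := by
        apply intervalIntegral.integral_congr
        intro ξ hξ
        rw [Set.uIcc_of_le (hτsa s hs.1 hs.2)] at hξ
        show (lamStar - ε) * p ξ = c * pt ξ
        rw [hpt_eq ξ (le_trans hτs0 hξ.1)]
      show p s * Real.exp (∫ ξ in τ s..σ t, (lamStar - ε) * p ξ)
          = p s * Real.exp (c * (Φ a - Φ (τ s)))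
      rw [e1, intervalIntegral.integral_const_mul, hΦ_sub]
    rw [hid]
    exact hres
  have hfin := limsup_le_one_of_eventually hG
  linarith


/-- **Corollary 3.2.** Suppose `liminf_{t→∞} ∫_{τ t}^{t} p = q > 0`, `λ*` is the
smallest root of `e^{q λ} = λ`, and there is a non-decreasing continuous function
`σ` with `τ t ≤ σ t ≤ t` such that
`limsup_{ε→0+} ( limsup_{t→∞} ∫_{σ t}^{t} p s · exp(∫_{τ s}^{σ t} (λ* − ε) p ξ dξ) ds ) > 1`.
Then every solution of `x'(t) + p t * x (τ t) = 0` is oscillatory. -/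
theorem oscillation_single_arg_liminf_root
    (t0 : ℝ) (p τ : ℝ → ℝ)
    (hp_cont : ContinuousOn p (Set.Ici t0))
    (hp_nonneg : ∀ t, t0 ≤ t → 0 ≤ p t)
    (hτ_cont : ContinuousOn τ (Set.Ici t0))
    (hτ_nonneg : ∀ t, t0 ≤ t → 0 ≤ τ t)
    (hτ_le : ∀ t, t0 ≤ t → τ t ≤ t)
    (hτ_tendsto : Tendsto τ atTop atTop)
    (q : ℝ) (hq_pos : 0 < q)
    (hq : Filter.liminf (fun t : ℝ => ∫ s in τ t..t, p s) atTop = q)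
    (lamStar : ℝ)
    (hroot : Real.exp (q * lamStar) = lamStar)
    (hsmallest : ∀ lam, Real.exp (q * lam) = lam → lamStar ≤ lam)
    (σ : ℝ → ℝ)
    (hσ_cont : ContinuousOn σ (Set.Ici t0))
    (hσ_mono : MonotoneOn σ (Set.Ici t0))
    (hσ_ge : ∀ t, t0 ≤ t → τ t ≤ σ t)
    (hσ_le : ∀ t, t0 ≤ t → σ t ≤ t)
    (hlimsup :
      Filter.limsup (fun ε : ℝ =>
        Filter.limsup (fun t : ℝ =>
          ∫ s in σ t..t, p s *
            Real.exp (∫ ξ in τ s..σ t, (lamStar - ε) * p ξ)) atTop)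
        (nhdsWithin 0 (Set.Ioi 0)) > 1)
    (x : ℝ → ℝ) (hx_cont : Continuous x)
    (hx_sol : ∃ T, t0 ≤ T ∧ ∀ t, T ≤ t →
      HasDerivAt x (-(p t * x (τ t))) t) :
    ∀ T : ℝ, ∃ t, T ≤ t ∧ x t = 0 := by
  intro T
  by_contra hcon
  push_neg at hcon
  obtain ⟨Ts, hTs0, hsol⟩ := hx_sol
  set B := max T (max Ts t0) with hB_def
  have hBt0 : t0 ≤ B := le_trans (le_max_right Ts t0) (le_max_right _ _)
  have hBT : T ≤ B := le_max_left _ _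
  have hBTs : Ts ≤ B := le_trans (le_max_left _ _) (le_max_right _ _)
  have hne : ∀ t, B ≤ t → x t ≠ 0 := fun t ht => hcon t (le_trans hBT ht)
  have hsign : (∀ t, B ≤ t → 0 < x t) ∨ (∀ t, B ≤ t → x t < 0) := by
    rcases lt_or_gt_of_ne (hne B le_rfl) with hneg | hpos
    · right; intro t ht
      rcases lt_or_gt_of_ne (hne t ht) with h | h
      · exact h
      · exfalso
        have hmem : (0:ℝ) ∈ Set.Icc (x B) (x t) := ⟨hneg.le, h.le⟩
        obtain ⟨z, hz, hz0⟩ := intermediate_value_Icc ht hx_cont.continuousOn hmem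
        exact hne z hz.1 hz0
    · left; intro t ht
      rcases lt_or_gt_of_ne (hne t ht) with h | h
      · exfalso
        have hmem : (0:ℝ) ∈ Set.Icc (x t) (x B) := ⟨h.le, hpos.le⟩
        obtain ⟨z, hz, hz0⟩ := intermediate_value_Icc' ht hx_cont.continuousOn hmem
        exact hne z hz.1 hz0
      · exact h
  rcases hsign with hpos | hneg
  · exact main_aux t0 p τ hp_cont hp_nonneg hτ_cont hτ_le hτ_tendsto q hq_pos hq
      lamStar hroot hsmallest σ hσ_mono hσ_ge hσ_le hlimsup x hx_cont B hBt0 hpos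
      (fun t ht => hsol t (le_trans hBTs ht))
  · apply main_aux t0 p τ hp_cont hp_nonneg hτ_cont hτ_le hτ_tendsto q hq_pos hq
      lamStar hroot hsmallest σ hσ_mono hσ_ge hσ_le hlimsup (fun t => -x t)
      hx_cont.neg B hBt0 (fun t ht => neg_pos.2 (hneg t ht))
    intro t ht
    have h1 := (hsol t (le_trans hBTs ht)).neg
    exact h1.congr_deriv (by ring)
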